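/- For every positive integer m and every p ∈ [1, ∞), the quantile-Hoeffding operator I_m : L^p(0,1) → L^p(0,1) is linear and bounded, and satisfies ‖I_m(h)‖_p ≤ ‖h‖_p for all h ∈ L^p(0,1), with this bound holding uniformly in m. -/

import Mathlib

open MeasureTheory Filter Set
open scoped BoundedContinuousFunction ProbabilityTheory

noncomputable section

/-- Density of the Beta(j, m-j+1) distribution. -/
def betaDens (m j : ℕ) (u : ℝ) : ℝ :=
  (m : ℝ) * ((m - 1).choose (j - 1) : ℝ) * u ^ (j - 1) * (1 - u) ^ (m - j)

/-- Quantile function (left-continuous generalized inverse). -/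
def quantile (G : ℝ → ℝ) (p : ℝ) : ℝ :=
  sInf {x : ℝ | p ≤ G x}

/-- `G` is a cumulative distribution function on ℝ. -/
structure IsCDF (G : ℝ → ℝ) : Prop where
  mono : Monotone G
  rightCont : ∀ x, ContinuousWithinAt G (Ici x) x
  tendsto_atBot : Tendsto G atBot (nhds 0)
  tendsto_atTop : Tendsto G atTop (nhds 1)

/-- `G` has finite mean: its quantile function is integrable on (0,1). -/
def HasFiniteMean (G : ℝ → ℝ) : Prop :=
  IntegrableOn (fun u => quantile G u) (Ioo (0:ℝ) 1)

/-- Expected j-th order statistic from a sample of size m drawn from G. -/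
def muOS (m j : ℕ) (G : ℝ → ℝ) : ℝ :=
  ∫ u in Ioo (0:ℝ) 1, quantile G u * betaDens m j u

/-- The Hoeffding CDF operator `H_m`. -/
def hoeffCDF (m : ℕ) (G : ℝ → ℝ) (x : ℝ) : ℝ :=
  (m : ℝ)⁻¹ * ∑ j ∈ Finset.Icc 1 m, if muOS m j G ≤ x then (1:ℝ) else 0

/-- The quantile-Hoeffding operator `I_m`. -/
def quantHoeff (m : ℕ) (h : ℝ → ℝ) (u : ℝ) : ℝ :=
  ∑ j ∈ Finset.Icc 1 m,
    (∫ t in Ioo (0:ℝ) 1, h t * betaDens m j t) *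
      (if u ∈ Ioc (((j : ℝ) - 1) / m) ((j : ℝ) / m) then (1:ℝ) else 0)

/-- Empirical CDF of the reals `x 0, ..., x (n-1)`. -/
def ecdf (n : ℕ) (x : ℕ → ℝ) (t : ℝ) : ℝ :=
  (n : ℝ)⁻¹ * ∑ i ∈ Finset.range n, if x i ≤ t then (1:ℝ) else 0

/-- Empirical CDF of the random sample `X 0, ..., X (n-1)`. -/
def empCDF {Ω : Type*} (X : ℕ → Ω → ℝ) (n : ℕ) (ω : Ω) : ℝ → ℝ :=
  fun t => (n : ℝ)⁻¹ * ∑ i ∈ Finset.range n, if X i ω ≤ t then (1:ℝ) else 0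

/-! For `1 ≤ j ≤ m` the function `f_j = betaDens m j` is a probability density on `(0,1)`,
so Jensen's inequality gives `|∫ h f_j|^p ≤ ∫ |h|^p f_j`. As `I_m h` equals `∫ h f_j` on the
`j`-th block of length `1/m`,
`∫ |I_m h|^p = (1/m) ∑_j |∫ h f_j|^p ≤ (1/m) ∫ |h|^p ∑_j f_j = ∫ |h|^p`,
the densities summing to `m` by the binomial theorem. -/

theorem abs_integral_mul_rpow_le_integral_rpow_mul {α : Type*} [MeasurableSpace α]
    {μ : Measure α} {w h : α → ℝ} {p : ℝ} (hp : 1 ≤ p) (hw : Measurable w)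
    (hw0 : 0 ≤ᵐ[μ] w) (hw1 : ∫ x, w x ∂μ = 1) (hh : Integrable (fun x => h x * w x) μ)
    (hhp : Integrable (fun x => |h x| ^ p * w x) μ) :
    |∫ x, h x * w x ∂μ| ^ p ≤ ∫ x, |h x| ^ p * w x ∂μ := by
  set ν := μ.withDensity fun x => ((w x).toNNReal : ENNReal)
  have hw_meas : Measurable fun x => (w x).toNNReal := hw.real_toNNReal
  have hsmul : ∀ f : α → ℝ, (fun x => (w x).toNNReal • f x) =ᵐ[μ] fun x => f x * w x :=
    fun f => hw0.mono fun x hx => by simp [NNReal.smul_def, Real.coe_toNNReal _ hx, mul_comm]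
  have integral_ν : ∀ f : α → ℝ, ∫ x, f x ∂ν = ∫ x, f x * w x ∂μ := fun f => by
    rw [integral_withDensity_eq_integral_smul hw_meas, integral_congr_ae (hsmul f)]
  have integrable_ν : ∀ f : α → ℝ, Integrable (fun x => f x * w x) μ → Integrable f ν :=
    fun f hf => (integrable_withDensity_iff_integrable_smul hw_meas).2 (hf.congr (hsmul f).symm)
  have : IsProbabilityMeasure ν := by
    have h1 := integral_ν 1
    simp only [Pi.one_apply, one_mul, hw1, integral_const, smul_eq_mul, mul_one] at h1
    exact ⟨ENNReal.toReal_eq_one_iff _ |>.1 h1⟩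
  have habs : Integrable (fun x => |h x| * w x) μ :=
    hh.abs.congr (hw0.mono fun x hx => by simp [abs_mul, abs_of_nonneg hx])
  rw [← integral_ν, ← integral_ν]
  calc |∫ x, h x ∂ν| ^ p ≤ (∫ x, |h x| ∂ν) ^ p := by
        gcongr
        exact abs_integral_le_integral_abs
    _ ≤ ∫ x, |h x| ^ p ∂ν :=
      (convexOn_rpow hp).map_integral_le (Real.continuous_rpow_const (by linarith)).continuousOn
        isClosed_Ici (ae_of_all _ fun x => abs_nonneg (h x)) (integrable_ν _ habs)
        (integrable_ν _ hhp)

theorem comp_sum_indicator_const {ι α : Type*} {s : Finset ι} {S : ι → Set α}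
    (hS : (s : Set ι).PairwiseDisjoint S) {φ : ℝ → ℝ} (hφ : φ 0 = 0) (c : ι → ℝ) (u : α) :
    φ (∑ j ∈ s, (S j).indicator (fun _ => c j) u)
      = ∑ j ∈ s, (S j).indicator (fun _ => φ (c j)) u := by
  by_cases hu : ∃ k ∈ s, u ∈ S k
  · obtain ⟨k, hk, huk⟩ := hu
    have hne : ∀ j ∈ s, j ≠ k → u ∉ S j := fun j hj hjk huj => hjk (hS.elim_set hj hk u huj huk)
    rw [Finset.sum_eq_single_of_mem k hk fun j hj hjk => indicator_of_notMem (hne j hj hjk) _,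
      Finset.sum_eq_single_of_mem k hk fun j hj hjk => indicator_of_notMem (hne j hj hjk) _,
      indicator_of_mem huk, indicator_of_mem huk]
  · push Not at hu
    rw [Finset.sum_eq_zero fun j hj => indicator_of_notMem (hu j hj) _,
      Finset.sum_eq_zero fun j hj => indicator_of_notMem (hu j hj) _, hφ]

open ProbabilityTheory in
theorem setIntegral_Ioo_pow_mul_one_sub_pow (a b : ℕ) :
    ∫ x in Ioo (0:ℝ) 1, x ^ a * (1 - x) ^ b
      = (a.factorial * b.factorial : ℝ) / (a + b + 1).factorial := by
  have hα : (0:ℝ) < a + 1 := by positivity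
  have hβ : (0:ℝ) < b + 1 := by positivity
  have hbeta : beta (a + 1) (b + 1) = (a.factorial * b.factorial : ℝ) / (a + b + 1).factorial := by
    rw [beta, show (a:ℝ) + 1 + (b + 1) = ((a + b + 1 : ℕ) : ℝ) + 1 by push_cast; ring]
    simp only [Real.Gamma_nat_eq_factorial]
  have hone := lintegral_betaPDF_eq_one hα hβ
  rw [lintegral_betaPDF, ← ENNReal.toReal_eq_one_iff, ← integral_eq_lintegral_of_nonneg_ae] at hone
  · simp only [add_sub_cancel_right, Real.rpow_natCast, mul_assoc, integral_const_mul, one_div,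
      inv_mul_eq_one₀ (beta_pos hα hβ).ne'] at hone
    rw [← hone, hbeta]
  · refine ae_restrict_of_forall_mem measurableSet_Ioo fun x hx => ?_
    have := (beta_pos hα hβ).le
    have : 0 ≤ 1 - x := by linarith [hx.2]
    have := hx.1.le
    positivity
  · exact Measurable.aestronglyMeasurable (by fun_prop)

theorem setIntegral_Ioo_betaDens {m j : ℕ} (hj : 1 ≤ j) (hjm : j ≤ m) :
    ∫ t in Ioo (0:ℝ) 1, betaDens m j t = 1 := by
  have hfact : (m.factorial : ℝ)
      = m * (m - 1).choose (j - 1) * ((j - 1).factorial * (m - j).factorial) := by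
    have h := Nat.choose_mul_factorial_mul_factorial (show j - 1 ≤ m - 1 by omega)
    rw [show m - 1 - (j - 1) = m - j by omega] at h
    rw [← Nat.mul_factorial_pred (by omega : m ≠ 0), ← h]
    push_cast
    ring
  simp only [betaDens, mul_assoc, integral_const_mul]
  rw [setIntegral_Ioo_pow_mul_one_sub_pow, show j - 1 + (m - j) + 1 = m by omega]
  have : (m.factorial : ℝ) ≠ 0 := by positivity
  field_simp
  rw [hfact]
  ring

theorem sum_betaDens (m : ℕ) (t : ℝ) : ∑ j ∈ Finset.Icc 1 m, betaDens m j t = m := by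
  cases m with
  | zero => simp
  | succ n =>
    have hbinom := add_pow t (1 - t) n
    rw [add_sub_cancel, one_pow] at hbinom
    rw [← Finset.Ico_add_one_right_eq_Icc, Finset.sum_Ico_eq_sum_range, Nat.add_sub_cancel]
    calc ∑ k ∈ Finset.range (n + 1), betaDens (n + 1) (1 + k) t
        = ∑ k ∈ Finset.range (n + 1), ((n : ℝ) + 1) * (t ^ k * (1 - t) ^ (n - k) * n.choose k) := by
          refine Finset.sum_congr rfl fun k _ => ?_
          rw [betaDens, Nat.add_sub_cancel, Nat.add_sub_cancel_left,
            show n + 1 - (1 + k) = n - k by omega]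
          push_cast
          ring
      _ = ((n + 1 : ℕ) : ℝ) := by rw [← Finset.mul_sum, ← hbinom, mul_one, Nat.cast_succ]

theorem continuous_betaDens (m j : ℕ) : Continuous (betaDens m j) := by
  unfold betaDens; fun_prop

theorem betaDens_nonneg (m j : ℕ) {t : ℝ} (ht : t ∈ Icc (0:ℝ) 1) : 0 ≤ betaDens m j t := by
  have : 0 ≤ 1 - t := sub_nonneg.2 ht.2
  have := ht.1
  unfold betaDens
  positivity

theorem integrableOn_mul_betaDens {h : ℝ → ℝ} (hh : IntegrableOn h (Ioo 0 1)) (m j : ℕ) :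
    IntegrableOn (fun t => h t * betaDens m j t) (Ioo 0 1) :=
  hh.mul_continuousOn_of_subset (continuous_betaDens m j).continuousOn measurableSet_Ioo
    isCompact_Icc Ioo_subset_Icc_self

theorem pairwise_disjoint_Ioc_div (m : ℕ) :
    Pairwise (Function.onFun Disjoint fun j : ℕ => Ioc (((j : ℝ) - 1) / m) ((j : ℝ) / m)) := by
  refine pairwise_disjoint_on _ |>.2 fun i j hij => Ioc_disjoint_Ioc_of_le ?_
  gcongr
  have : ((i + 1 : ℕ) : ℝ) ≤ j := by exact_mod_cast hij
  push_cast at this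
  linarith

theorem measureReal_restrict_Ioo_Ioc_div {m j : ℕ} (hj : 1 ≤ j) (hjm : j ≤ m) :
    (volume.restrict (Ioo (0:ℝ) 1)).real (Ioc (((j : ℝ) - 1) / m) ((j : ℝ) / m)) = 1 / m := by
  have hsub : Ioc (((j : ℝ) - 1) / m) ((j : ℝ) / m) ⊆ Ioc 0 1 := by
    apply Ioc_subset_Ioc
    · have : (1 : ℝ) ≤ j := by exact_mod_cast hj
      exact div_nonneg (by linarith) (Nat.cast_nonneg m)
    · exact div_le_one_of_le₀ (by exact_mod_cast hjm) (Nat.cast_nonneg m)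
  rw [measureReal_def, Measure.restrict_congr_set Ioo_ae_eq_Ioc,
    Measure.restrict_apply measurableSet_Ioc, inter_eq_left.2 hsub, Real.volume_Ioc,
    show (j : ℝ) / m - ((j : ℝ) - 1) / m = 1 / m by ring, ENNReal.toReal_ofReal (by positivity)]

theorem quantHoeff_eq_sum_indicator (m : ℕ) (h : ℝ → ℝ) :
    quantHoeff m h = fun u => ∑ j ∈ Finset.Icc 1 m,
      (Ioc (((j : ℝ) - 1) / m) ((j : ℝ) / m)).indicator
        (fun _ => ∫ t in Ioo (0:ℝ) 1, h t * betaDens m j t) u := by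
  funext u
  simp only [quantHoeff, indicator_apply, mul_ite, mul_one, mul_zero]

theorem quantHoeff_linear_combination {m : ℕ} {h g : ℝ → ℝ} (hh : IntegrableOn h (Ioo 0 1))
    (hg : IntegrableOn g (Ioo 0 1)) (a b u : ℝ) :
    quantHoeff m (fun t => a * h t + b * g t) u = a * quantHoeff m h u + b * quantHoeff m g u := by
  simp only [quantHoeff, Finset.mul_sum, ← Finset.sum_add_distrib, add_mul, mul_assoc]
  refine Finset.sum_congr rfl fun j _ => ?_
  rw [integral_add ((integrableOn_mul_betaDens hh m j).const_mul a)
    ((integrableOn_mul_betaDens hg m j).const_mul b),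
    integral_const_mul, integral_const_mul]
  ring

theorem memLp_quantHoeff (m : ℕ) (h : ℝ → ℝ) (q : ENNReal) :
    MemLp (quantHoeff m h) q (volume.restrict (Ioo (0:ℝ) 1)) := by
  rw [quantHoeff_eq_sum_indicator]
  exact memLp_finsetSum _ fun j _ =>
    memLp_indicator_const q measurableSet_Ioc _ (Or.inr (measure_ne_top _ _))

theorem setIntegral_abs_quantHoeff_rpow {m : ℕ} {p : ℝ} (hp : p ≠ 0) (h : ℝ → ℝ) :
    ∫ u in Ioo (0:ℝ) 1, |quantHoeff m h u| ^ p
      = ∑ j ∈ Finset.Icc 1 m, |∫ t in Ioo (0:ℝ) 1, h t * betaDens m j t| ^ p / m := by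
  simp_rw [quantHoeff_eq_sum_indicator, comp_sum_indicator_const
    ((pairwise_disjoint_Ioc_div m).set_pairwise _) (φ := fun x => |x| ^ p)
    (by simp [Real.zero_rpow hp])]
  rw [integral_finsetSum _ fun j _ => (integrable_const _).indicator measurableSet_Ioc]
  refine Finset.sum_congr rfl fun j hj => ?_
  rw [Finset.mem_Icc] at hj
  rw [integral_indicator_const _ measurableSet_Ioc, measureReal_restrict_Ioo_Ioc_div hj.1 hj.2,
    smul_eq_mul]
  ring

theorem abs_setIntegral_mul_betaDens_rpow_le {m j : ℕ} (hj : 1 ≤ j) (hjm : j ≤ m) {p : ℝ}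
    (hp : 1 ≤ p) {h : ℝ → ℝ} (hh : IntegrableOn h (Ioo 0 1))
    (hhp : IntegrableOn (fun t => |h t| ^ p) (Ioo 0 1)) :
    |∫ t in Ioo (0:ℝ) 1, h t * betaDens m j t| ^ p
      ≤ ∫ t in Ioo (0:ℝ) 1, |h t| ^ p * betaDens m j t :=
  abs_integral_mul_rpow_le_integral_rpow_mul hp (continuous_betaDens m j).measurable
    (ae_restrict_of_forall_mem measurableSet_Ioo fun _ ht =>
      betaDens_nonneg m j (Ioo_subset_Icc_self ht))
    (setIntegral_Ioo_betaDens hj hjm) (integrableOn_mul_betaDens hh m j)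
    (integrableOn_mul_betaDens hhp m j)

theorem setIntegral_abs_quantHoeff_rpow_le {m : ℕ} {p : ℝ} (hp : 1 ≤ p) {h : ℝ → ℝ}
    (hh : IntegrableOn h (Ioo 0 1)) (hhp : IntegrableOn (fun t => |h t| ^ p) (Ioo 0 1)) :
    ∫ u in Ioo (0:ℝ) 1, |quantHoeff m h u| ^ p ≤ ∫ u in Ioo (0:ℝ) 1, |h u| ^ p := by
  rw [setIntegral_abs_quantHoeff_rpow (by positivity)]
  rcases m.eq_zero_or_pos with rfl | hm
  · simpa using integral_nonneg fun _ => by positivity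
  calc ∑ j ∈ Finset.Icc 1 m, |∫ t in Ioo (0:ℝ) 1, h t * betaDens m j t| ^ p / m
      ≤ ∑ j ∈ Finset.Icc 1 m, (∫ t in Ioo (0:ℝ) 1, |h t| ^ p * betaDens m j t) / m := by
        gcongr with j hj
        exact abs_setIntegral_mul_betaDens_rpow_le (Finset.mem_Icc.1 hj).1
          (Finset.mem_Icc.1 hj).2 hp hh hhp
    _ = (∫ t in Ioo (0:ℝ) 1, |h t| ^ p * m) / m := by
        rw [← Finset.sum_div,
          ← integral_finsetSum _ fun j _ => integrableOn_mul_betaDens hhp m j]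
        simp_rw [← Finset.mul_sum, sum_betaDens]
    _ = ∫ t in Ioo (0:ℝ) 1, |h t| ^ p := by
        rw [integral_mul_const]
        field_simp

theorem quantHoeff_linear_and_bounded_general
    (m : ℕ) (p : ℝ) (hp : 1 ≤ p) :
    (∀ h g : ℝ → ℝ,
      MemLp h (ENNReal.ofReal p) (volume.restrict (Ioo (0:ℝ) 1)) →
      MemLp g (ENNReal.ofReal p) (volume.restrict (Ioo (0:ℝ) 1)) →
      ∀ a b : ℝ, ∀ u : ℝ,
        quantHoeff m (fun t => a * h t + b * g t) u
          = a * quantHoeff m h u + b * quantHoeff m g u) ∧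
    (∀ h : ℝ → ℝ,
      MemLp h (ENNReal.ofReal p) (volume.restrict (Ioo (0:ℝ) 1)) →
      MemLp (quantHoeff m h) (ENNReal.ofReal p) (volume.restrict (Ioo (0:ℝ) 1)) ∧
      (∫ u in Ioo (0:ℝ) 1, |quantHoeff m h u| ^ p) ^ (1/p)
        ≤ (∫ u in Ioo (0:ℝ) 1, |h u| ^ p) ^ (1/p)) := by
  have hp0 : 0 < p := by linarith
  have integrableOn_of_memLp {h : ℝ → ℝ}
      (hh : MemLp h (ENNReal.ofReal p) (volume.restrict (Ioo (0:ℝ) 1))) :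
      IntegrableOn h (Ioo 0 1) :=
    hh.integrable (ENNReal.one_le_ofReal.2 hp)
  refine ⟨fun h g hh hg => quantHoeff_linear_combination (integrableOn_of_memLp hh)
    (integrableOn_of_memLp hg), fun h hh => ⟨memLp_quantHoeff m h _, ?_⟩⟩
  have hhp : IntegrableOn (fun t => |h t| ^ p) (Ioo 0 1) := by
    simpa [IntegrableOn, ENNReal.toReal_ofReal hp0.le] using hh.integrable_norm_rpow'
  exact Real.rpow_le_rpow (integral_nonneg fun _ => by positivity)
    (setIntegral_abs_quantHoeff_rpow_le hp (integrableOn_of_memLp hh) hhp) (by positivity)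

/-- For every `m` and every `p ∈ [1, ∞)`, the quantile-Hoeffding operator
`I_m : L^p(0,1) → L^p(0,1)` is linear, and is bounded with operator norm at most `1`
(uniformly in `m`): `‖I_m(h)‖_p ≤ ‖h‖_p` for all `h ∈ L^p(0,1)`. -/
theorem quantHoeff_linear_and_bounded
    (m : ℕ) (hm : 0 < m) (p : ℝ) (hp : 1 ≤ p) :
    (∀ h g : ℝ → ℝ,
      MemLp h (ENNReal.ofReal p) (volume.restrict (Ioo (0:ℝ) 1)) →
      MemLp g (ENNReal.ofReal p) (volume.restrict (Ioo (0:ℝ) 1)) →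
      ∀ a b : ℝ, ∀ u : ℝ,
        quantHoeff m (fun t => a * h t + b * g t) u
          = a * quantHoeff m h u + b * quantHoeff m g u) ∧
    (∀ h : ℝ → ℝ,
      MemLp h (ENNReal.ofReal p) (volume.restrict (Ioo (0:ℝ) 1)) →
      MemLp (quantHoeff m h) (ENNReal.ofReal p) (volume.restrict (Ioo (0:ℝ) 1)) ∧
      (∫ u in Ioo (0:ℝ) 1, |quantHoeff m h u| ^ p) ^ (1/p)
        ≤ (∫ u in Ioo (0:ℝ) 1, |h u| ^ p) ^ (1/p)) :=
  quantHoeff_linear_and_bounded_general m p hp
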